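/- Let W be an affine Weyl group of type C̃_2 (diagram t = s = t' with weights L(t)=a, L(s)=b, L(t')=c, a ≥ c ≥ 0, b ≥ 0). Let 𝒲^max = { w ∈ 𝒲 : L(w) = ν_L } where 𝒲 is the union of proper standard parabolic subgroups and ν_L = max_{I ⊊ S} L(w_I). If a > c and b > 0 then 𝒲^max = {tsts}; if a > c and b = 0 then 𝒲^max = {tsts, tst}; if a = c > 0 and b > 0 then 𝒲^max = {tsts, t'st's}. -/

import Mathlib

/-!
Every element of a proper standard parabolic subgroup of `C̃₂` lies in one of the dihedral
subgroups `W_{t,s}`, `W_{t,t'}`, `W_{s,t'}`, hence is the product of an alternating word of length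
at most `m_{ij}`. These words are reduced, as a permutation representation on `(ℤ/4)²` shows, so
`L` of such an element is `n_t a + n_s b + n_{t'} c`, with `n_x` the number of occurrences of `x`.
All these words have `n_t + n_{t'} ≤ 2` and `n_s ≤ 2`, so with `c ≤ a` the weight is at most
`2a + 2b = L(tsts)`, and it equals `2a + 2b` exactly when each of the three inequalities
`n_{t'} c ≤ n_{t'} a`, `(n_t + n_{t'}) a ≤ 2a`, `n_s b ≤ 2b` is an equality. Reading off the words
for which this happens in each of the three cases gives `𝒲^max`.
-/

theorem exists_zpow_of_mem_closure_pair {G : Type*} [Group G] {x y w : G} (hx : x * x = 1)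
    (hy : y * y = 1) (hw : w ∈ Subgroup.closure {x, y}) :
    ∃ n : ℤ, w = (x * y) ^ n ∨ w = y * (x * y) ^ n := by
  have hx' : x⁻¹ = x := inv_eq_of_mul_eq_one_left hx
  have hy' : y⁻¹ = y := inv_eq_of_mul_eq_one_left hy
  have step : ∀ u ∈ ({x, y} : Set G), ∀ z : G,
      (∃ n : ℤ, z = (x * y) ^ n ∨ z = y * (x * y) ^ n) →
      ∃ n : ℤ, u * z = (x * y) ^ n ∨ u * z = y * (x * y) ^ n := by
    rintro u (rfl | rfl) z ⟨n, rfl | rfl⟩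
    · refine ⟨-1 + n, Or.inr ?_⟩
      rw [zpow_add, zpow_neg_one, mul_inv_rev, hx', hy', ← mul_assoc, ← mul_assoc, hy, one_mul]
    · exact ⟨1 + n, Or.inl (by rw [zpow_add, zpow_one, mul_assoc])⟩
    · exact ⟨n, Or.inr rfl⟩
    · exact ⟨n, Or.inl (by rw [← mul_assoc, hy, one_mul])⟩
  induction hw using Subgroup.closure_induction_left with
  | one => exact ⟨0, Or.inl (zpow_zero _).symm⟩
  | mul_left u hu z _ ih => exact step u hu z ih
  | inv_mul_cancel u hu z _ ih =>
    rcases hu with rfl | rfl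
    · rw [hx']; exact step _ (.inl rfl) z ih
    · rw [hy']; exact step _ (.inr rfl) z ih

namespace CoxeterSystem

variable {B W : Type*} [Group W] {M : CoxeterMatrix B} (cs : CoxeterSystem M W)

theorem wordProd_alternatingWord_mem_closure (i j : B) (k : ℕ) :
    cs.wordProd (alternatingWord i j k) ∈ Subgroup.closure {cs.simple i, cs.simple j} := by
  induction k generalizing i j with
  | zero => exact Subgroup.one_mem _
  | succ k ih =>
    rw [alternatingWord_succ, wordProd_concat, Set.pair_comm]
    exact mul_mem (ih j i) (Subgroup.subset_closure (by simp))

theorem exists_alternatingWord_of_mem_closure {i j : B} (hM : M i j ≠ 0) {w : W}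
    (hw : w ∈ Subgroup.closure {cs.simple i, cs.simple j}) :
    ∃ k < 2 * M i j, w = cs.wordProd (alternatingWord i j k) := by
  obtain ⟨n, hn⟩ := exists_zpow_of_mem_closure_pair (cs.simple_mul_simple_self i)
    (cs.simple_mul_simple_self j) hw
  have hM' : (0 : ℤ) < M i j := by exact_mod_cast Nat.pos_of_ne_zero hM
  set m := (n % (M i j : ℤ)).toNat
  have hm : m < M i j := by
    have := Int.emod_lt_of_pos n hM'
    omega
  have hpow : (cs.simple i * cs.simple j) ^ n = (cs.simple i * cs.simple j) ^ m := by
    rw [zpow_eq_zpow_emod' n (cs.simple_mul_simple_pow i j), ← zpow_natCast,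
      Int.toNat_of_nonneg (Int.emod_nonneg _ hM'.ne')]
  rcases hn with hn | hn
  · refine ⟨2 * m, by omega, ?_⟩
    rw [prod_alternatingWord_eq_mul_pow, hn, hpow]
    simp
  · refine ⟨2 * m + 1, by omega, ?_⟩
    rw [prod_alternatingWord_eq_mul_pow, hn, hpow]
    simp [Nat.add_div_of_dvd_right]

theorem exists_short_alternatingWord_of_mem_closure {i j : B} (hM : M i j ≠ 0) {w : W}
    (hw : w ∈ Subgroup.closure {cs.simple i, cs.simple j}) :
    ∃ k ≤ M i j, w = cs.wordProd (alternatingWord i j k) ∨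
      w = cs.wordProd (alternatingWord j i k) := by
  obtain ⟨k, hk, rfl⟩ := cs.exists_alternatingWord_of_mem_closure hM hw
  by_cases hkM : k ≤ M i j
  · exact ⟨k, hkM, Or.inl rfl⟩
  · refine ⟨M i j * 2 - k, by omega, Or.inr ?_⟩
    exact cs.prod_alternatingWord_eq_prod_alternatingWord_sub i j k (by omega)

theorem lift_wordProd {G : Type*} [Monoid G] {f : B → G} (hf : M.IsLiftable f) (ω : List B) :
    cs.lift ⟨f, hf⟩ (cs.wordProd ω) = (ω.map f).prod := by
  rw [wordProd, map_list_prod, List.map_map]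
  exact congrArg _ (List.map_congr_left fun i _ => cs.lift_apply_simple hf i)

theorem isReduced_of_forall_map_wordProd_ne {G : Type*} [Group G] (φ : W →* G) {ω : List B}
    (h : ∀ k < ω.length, ∀ v : Fin k → B,
      φ (cs.wordProd (List.ofFn v)) ≠ φ (cs.wordProd ω)) :
    cs.IsReduced ω := by
  obtain ⟨ω', hω', heq⟩ := cs.exists_isReduced (cs.wordProd ω)
  refine le_antisymm (cs.length_wordProd_le ω) (not_lt.mp fun hlt => ?_)
  rw [heq, hω'.eq] at hlt
  exact h _ hlt ω'.get (by rw [List.ofFn_get, heq])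

theorem apply_wordProd_eq_sum_of_isReduced {Γ : Type*} [AddCancelCommMonoid Γ] (L : W → Γ)
    (hL : ∀ u v : W, cs.length (u * v) = cs.length u + cs.length v → L (u * v) = L u + L v)
    {ω : List B} (hω : cs.IsReduced ω) :
    L (cs.wordProd ω) = (ω.map (L ∘ cs.simple)).sum := by
  induction ω with
  | nil =>
    have h := hL 1 1 (by simp)
    rw [mul_one] at h
    simpa using h
  | cons i ω ih =>
    have hω' : cs.IsReduced ω := by simpa using hω.drop 1
    rw [wordProd_cons, hL _ _ (by
      rw [← wordProd_cons, hω.eq, hω'.eq, length_simple, List.length_cons, add_comm]), ih hω']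
    simp

end CoxeterSystem

namespace Stmt12

/-- The Coxeter matrix of type `C̃₂` (generators `t, s, t'` with `m(t,s) = m(s,t') = 4`,
`m(t,t') = 2`). -/
def C2Matrix : CoxeterMatrix (Fin 3) where
  M := Matrix.of ![![1, 4, 2], ![4, 1, 4], ![2, 4, 1]]
  off_diagonal := by
    intro i i' h
    fin_cases i <;> fin_cases i' <;> simp_all

variable {W Γ : Type*} [Group W] [AddCommGroup Γ] [LinearOrder Γ] [IsOrderedAddMonoid Γ]
variable (cs : CoxeterSystem C2Matrix W)

/-- The standard parabolic subgroup `W_I`. -/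
def par (I : Set (Fin 3)) : Subgroup W := Subgroup.closure (cs.simple '' I)

/-- `w` is a longest element of `W_I`. -/
def IsLongest (I : Set (Fin 3)) (w : W) : Prop :=
  w ∈ par cs I ∧ ∀ v ∈ par cs I, cs.length v ≤ cs.length w

/-- `𝒲^max = { w ∈ 𝒲 : L w = ν_L }`, where `𝒲` is the union of the proper standard
parabolic subgroups. -/
def Wmax (L : W → Γ) (ν : Γ) : Set W :=
  {w | (∃ I : Set (Fin 3), I ≠ Set.univ ∧ w ∈ par cs I) ∧ L w = ν}

open CoxeterSystem

theorem nsmul_add_nsmul_add_nsmul_le {a b c : Γ} (hb : 0 ≤ b) (hc : 0 ≤ c) (hca : c ≤ a)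
    {p q r m n : ℕ} (hpr : p + r ≤ m) (hq : q ≤ n) :
    p • a + q • b + r • c ≤ m • a + n • b :=
  calc p • a + q • b + r • c ≤ p • a + q • b + r • a := by gcongr
    _ = (p + r) • a + q • b := by rw [add_nsmul]; abel
    _ ≤ m • a + n • b :=
      add_le_add (nsmul_le_nsmul_left (hc.trans hca) hpr) (nsmul_le_nsmul_left hb hq)

theorem nsmul_add_nsmul_add_nsmul_eq_iff {a b c : Γ} (hb : 0 ≤ b) (hc : 0 ≤ c) (hca : c ≤ a)
    {p q r m n : ℕ} (hpr : p + r ≤ m) (hq : q ≤ n) :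
    p • a + q • b + r • c = m • a + n • b ↔
      (r = 0 ∨ c = a) ∧ (p + r = m ∨ a = 0) ∧ (q = n ∨ b = 0) := by
  have hsmul_eq {x : Γ} (hx : 0 ≤ x) {k l : ℕ} : k • x = l • x ↔ k = l ∨ x = 0 := by
    rcases hx.eq_or_lt with rfl | hx
    · simp
    · simp [(nsmul_left_strictMono hx).injective.eq_iff, hx.ne']
  have hlow : p • a + q • b + r • c ≤ (p + r) • a + q • b := by
    rw [add_nsmul, add_right_comm]; gcongr
  have hupp : (p + r) • a + q • b ≤ m • a + n • b :=
    add_le_add (nsmul_le_nsmul_left (hc.trans hca) hpr) (nsmul_le_nsmul_left hb hq)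
  have hfirst : p • a + q • b + r • c = (p + r) • a + q • b ↔ r = 0 ∨ c = a := by
    rw [add_nsmul, add_right_comm _ (r • a), add_left_cancel_iff]
    rcases eq_or_ne r 0 with rfl | hr
    · simp
    · simp [nsmul_right_inj hr, hr]
  rw [← hfirst, ← hsmul_eq (hc.trans hca), ← hsmul_eq hb, ← add_eq_add_iff_eq_and_eq
    (nsmul_le_nsmul_left (hc.trans hca) hpr) (nsmul_le_nsmul_left hb hq)]
  exact ⟨fun h => ⟨le_antisymm hlow (h ▸ hupp), le_antisymm hupp (h ▸ hlow)⟩,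
    fun h => h.1.trans h.2⟩

/-- The reflections `x ↦ -x`, `(x, y) ↦ (y, x)`, `y ↦ 2 - y` of `ℤ²` generating `C̃₂`, reduced
mod `4`; this quotient still tells the short alternating words apart from all shorter words. -/
def reflectionModel : Fin 3 → Equiv.Perm (ZMod 4 × ZMod 4) :=
  ![(Equiv.neg _).prodCongr (Equiv.refl _), Equiv.prodComm _ _,
    (Equiv.refl _).prodCongr (Equiv.subLeft 2)]

theorem isLiftable_reflectionModel : C2Matrix.IsLiftable reflectionModel := by
  unfold CoxeterMatrix.IsLiftable
  decide

set_option synthInstance.maxSize 1024 in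
theorem isReduced_alternatingWord {i j : Fin 3} {k : ℕ} (hk : k ≤ C2Matrix i j) :
    cs.IsReduced (alternatingWord i j k) := by
  apply cs.isReduced_of_forall_map_wordProd_ne (cs.lift ⟨_, isLiftable_reflectionModel⟩)
  simp only [lift_wordProd, length_alternatingWord]
  have key : ∀ i j : Fin 3, ∀ k < C2Matrix i j + 1, ∀ l < k, ∀ v : Fin l → Fin 3,
      ((List.ofFn v).map reflectionModel).prod ≠
        ((alternatingWord i j k).map reflectionModel).prod := by
    decide
  exact key i j k (Nat.lt_succ_of_le hk)

theorem exists_alternatingWord_of_mem_par {I : Set (Fin 3)} (hI : I ≠ Set.univ) {w : W}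
    (hw : w ∈ par cs I) :
    ∃ i j : Fin 3, ∃ k ≤ C2Matrix i j, w = cs.wordProd (alternatingWord i j k) := by
  obtain ⟨m, hm⟩ := (Set.ne_univ_iff_exists_notMem I).mp hI
  have hI : I ⊆ {m + 1, m + 2} := fun x hx => by
    have hother : ∀ x m : Fin 3, x ≠ m → x = m + 1 ∨ x = m + 2 := by decide
    exact hother x m (ne_of_mem_of_not_mem hx hm)
  have hw : w ∈ Subgroup.closure {cs.simple (m + 1), cs.simple (m + 2)} := by
    rw [← Set.image_pair]
    exact Subgroup.closure_mono (Set.image_mono hI) hw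
  have hM : C2Matrix (m + 1) (m + 2) ≠ 0 := by fin_cases m <;> decide
  obtain ⟨k, hk, h | h⟩ := cs.exists_short_alternatingWord_of_mem_closure hM hw
  · exact ⟨_, _, k, hk, h⟩
  · exact ⟨_, _, k, C2Matrix.symmetric (m + 1) (m + 2) ▸ hk, h⟩

theorem wordProd_alternatingWord_mem_par (i j : Fin 3) (k : ℕ) :
    cs.wordProd (alternatingWord i j k) ∈ par cs {i, j} := by
  rw [par, Set.image_pair]
  exact cs.wordProd_alternatingWord_mem_closure i j k

theorem pair_ne_univ (i j : Fin 3) : ({i, j} : Set (Fin 3)) ≠ Set.univ := by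
  obtain ⟨m, hmi, hmj⟩ : ∃ m, m ≠ i ∧ m ≠ j := by revert i j; decide
  intro h
  simpa [hmi, hmj] using h.ge (Set.mem_univ m)

theorem length_le_four_of_mem_par {I : Set (Fin 3)} (hI : I ≠ Set.univ) {w : W}
    (hw : w ∈ par cs I) : cs.length w ≤ 4 := by
  obtain ⟨i, j, k, hk, rfl⟩ := exists_alternatingWord_of_mem_par cs hI hw
  have hM : C2Matrix i j ≤ 4 := by fin_cases i <;> fin_cases j <;> decide
  calc cs.length (cs.wordProd (alternatingWord i j k)) ≤ k := by
        simpa using cs.length_wordProd_le (alternatingWord i j k)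
    _ ≤ 4 := hk.trans hM

theorem isLongest_wordProd_alternatingWord :
    IsLongest cs {0, 1} (cs.wordProd (alternatingWord 0 1 4)) := by
  refine ⟨wordProd_alternatingWord_mem_par cs 0 1 4, fun v hv => ?_⟩
  rw [(isReduced_alternatingWord cs (by decide)).eq, length_alternatingWord]
  exact length_le_four_of_mem_par cs (pair_ne_univ 0 1) hv

theorem count_alternatingWord_le {i j : Fin 3} {k : ℕ} (hk : k ≤ C2Matrix i j) :
    (alternatingWord i j k).count 0 + (alternatingWord i j k).count 2 ≤ 2 ∧
      (alternatingWord i j k).count 1 ≤ 2 := by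
  have key : ∀ i j : Fin 3, ∀ k < C2Matrix i j + 1,
      (alternatingWord i j k).count 0 + (alternatingWord i j k).count 2 ≤ 2 ∧
        (alternatingWord i j k).count 1 ≤ 2 := by
    decide
  exact key i j k (Nat.lt_succ_of_le hk)

theorem apply_wordProd_alternatingWord {A : Type*} [AddCancelCommMonoid A] {L : W → A}
    {a b c : A}
    (hweight : ∀ u v : W, cs.length (u * v) = cs.length u + cs.length v →
      L (u * v) = L u + L v)
    (ht : L (cs.simple 0) = a) (hs : L (cs.simple 1) = b) (ht' : L (cs.simple 2) = c)
    {i j : Fin 3} {k : ℕ} (hk : k ≤ C2Matrix i j) :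
    L (cs.wordProd (alternatingWord i j k)) = (alternatingWord i j k).count 0 • a +
      (alternatingWord i j k).count 1 • b + (alternatingWord i j k).count 2 • c := by
  rw [cs.apply_wordProd_eq_sum_of_isReduced L hweight (isReduced_alternatingWord cs hk),
    Finset.sum_list_map_count, Finset.sum_subset (Finset.subset_univ _) fun i _ hi => by
      simp [List.count_eq_zero_of_not_mem (by simpa using hi)], Fin.sum_univ_three]
  simp [ht, hs, ht']

theorem apply_le_of_mem_par {L : W → Γ} {a b c : Γ}
    (hweight : ∀ u v : W, cs.length (u * v) = cs.length u + cs.length v →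
      L (u * v) = L u + L v)
    (ht : L (cs.simple 0) = a) (hs : L (cs.simple 1) = b) (ht' : L (cs.simple 2) = c)
    (hb : 0 ≤ b) (hc : 0 ≤ c) (hca : c ≤ a) {I : Set (Fin 3)} (hI : I ≠ Set.univ) {w : W}
    (hw : w ∈ par cs I) : L w ≤ 2 • a + 2 • b := by
  obtain ⟨i, j, k, hk, rfl⟩ := exists_alternatingWord_of_mem_par cs hI hw
  have hcount := count_alternatingWord_le hk
  rw [apply_wordProd_alternatingWord cs hweight ht hs ht' hk]
  exact nsmul_add_nsmul_add_nsmul_le hb hc hca hcount.1 hcount.2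

theorem eq_two_nsmul_add_two_nsmul {L : W → Γ} {a b c : Γ}
    (hweight : ∀ u v : W, cs.length (u * v) = cs.length u + cs.length v →
      L (u * v) = L u + L v)
    (ht : L (cs.simple 0) = a) (hs : L (cs.simple 1) = b) (ht' : L (cs.simple 2) = c)
    (hb : 0 ≤ b) (hc : 0 ≤ c) (hca : c ≤ a) {ν : Γ}
    (hν₁ : ∃ (I : Set (Fin 3)) (w₀ : W), I ≠ Set.univ ∧ IsLongest cs I w₀ ∧ L w₀ = ν)
    (hν₂ : ∀ (I : Set (Fin 3)) (w₀ : W), I ≠ Set.univ → IsLongest cs I w₀ → L w₀ ≤ ν) :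
    ν = 2 • a + 2 • b := by
  obtain ⟨I, w₀, hI, hw₀, rfl⟩ := hν₁
  refine le_antisymm (apply_le_of_mem_par cs hweight ht hs ht' hb hc hca hI hw₀.1) ?_
  have h := hν₂ _ _ (pair_ne_univ 0 1) (isLongest_wordProd_alternatingWord cs)
  rw [apply_wordProd_alternatingWord cs hweight ht hs ht' (by decide)] at h
  simpa [alternatingWord] using h

/-- The alternating words of the proper parabolic subgroups whose weight attains `2a + 2b`, in the
form given by `nsmul_add_nsmul_add_nsmul_eq_iff`. -/
def maximalWords {A : Type*} [Zero A] (a b c : A) : Set (List (Fin 3)) :=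
  {ω | ∃ i j : Fin 3, ∃ k ≤ C2Matrix i j, ω = alternatingWord i j k ∧
    (ω.count 2 = 0 ∨ c = a) ∧ (ω.count 0 + ω.count 2 = 2 ∨ a = 0) ∧ (ω.count 1 = 2 ∨ b = 0)}

theorem Wmax_eq_image_maximalWords {L : W → Γ} {a b c : Γ}
    (hweight : ∀ u v : W, cs.length (u * v) = cs.length u + cs.length v →
      L (u * v) = L u + L v)
    (ht : L (cs.simple 0) = a) (hs : L (cs.simple 1) = b) (ht' : L (cs.simple 2) = c)
    (hb : 0 ≤ b) (hc : 0 ≤ c) (hca : c ≤ a) :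
    Wmax cs L (2 • a + 2 • b) = cs.wordProd '' maximalWords a b c := by
  ext w
  constructor
  · rintro ⟨⟨I, hI, hw⟩, hLw⟩
    obtain ⟨i, j, k, hk, rfl⟩ := exists_alternatingWord_of_mem_par cs hI hw
    rw [apply_wordProd_alternatingWord cs hweight ht hs ht' hk] at hLw
    have hcount := count_alternatingWord_le hk
    exact ⟨_, ⟨i, j, k, hk, rfl,
      (nsmul_add_nsmul_add_nsmul_eq_iff hb hc hca hcount.1 hcount.2).mp hLw⟩, rfl⟩
  · rintro ⟨_, ⟨i, j, k, hk, rfl, hmax⟩, rfl⟩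
    have hcount := count_alternatingWord_le hk
    refine ⟨⟨{i, j}, pair_ne_univ i j, wordProd_alternatingWord_mem_par cs i j k⟩, ?_⟩
    rw [apply_wordProd_alternatingWord cs hweight ht hs ht' hk]
    exact (nsmul_add_nsmul_add_nsmul_eq_iff hb hc hca hcount.1 hcount.2).mpr hmax

section MaximalWords

variable {A : Type*} [Zero A] {a b c : A}

theorem maximalWords_of_ne_of_ne_zero (hca : c ≠ a) (ha : a ≠ 0) (hb : b ≠ 0) :
    maximalWords a b c = {[0, 1, 0, 1], [1, 0, 1, 0]} := by
  ext ω
  simp only [maximalWords, hca, ha, hb, or_false, Set.mem_ofPred_eq, Set.mem_insert_iff,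
    Set.mem_singleton_iff]
  constructor
  · rintro ⟨i, j, k, hk, rfl, hmax⟩
    have key : ∀ i j : Fin 3, ∀ k < C2Matrix i j + 1, (alternatingWord i j k).count 2 = 0 ∧
        (alternatingWord i j k).count 0 + (alternatingWord i j k).count 2 = 2 ∧
        (alternatingWord i j k).count 1 = 2 →
        alternatingWord i j k = [0, 1, 0, 1] ∨ alternatingWord i j k = [1, 0, 1, 0] := by
      decide
    exact key i j k (Nat.lt_succ_of_le hk) hmax
  · rintro (rfl | rfl)
    exacts [⟨0, 1, 4, by decide, rfl, by decide⟩, ⟨1, 0, 4, by decide, rfl, by decide⟩]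

theorem maximalWords_of_ne_of_eq_zero (hca : c ≠ a) (ha : a ≠ 0) (hb : b = 0) :
    maximalWords a b c = {[0, 1, 0, 1], [1, 0, 1, 0], [0, 1, 0]} := by
  ext ω
  simp only [maximalWords, hca, ha, hb, or_false, or_true, and_true, Set.mem_ofPred_eq,
    Set.mem_insert_iff, Set.mem_singleton_iff]
  constructor
  · rintro ⟨i, j, k, hk, rfl, hmax⟩
    have key : ∀ i j : Fin 3, ∀ k < C2Matrix i j + 1, (alternatingWord i j k).count 2 = 0 ∧
        (alternatingWord i j k).count 0 + (alternatingWord i j k).count 2 = 2 →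
        alternatingWord i j k = [0, 1, 0, 1] ∨ alternatingWord i j k = [1, 0, 1, 0] ∨
          alternatingWord i j k = [0, 1, 0] := by
      decide
    exact key i j k (Nat.lt_succ_of_le hk) hmax
  · rintro (rfl | rfl | rfl)
    exacts [⟨0, 1, 4, by decide, rfl, by decide⟩, ⟨1, 0, 4, by decide, rfl, by decide⟩,
      ⟨1, 0, 3, by decide, rfl, by decide⟩]

theorem maximalWords_of_eq_of_ne_zero (hca : c = a) (ha : a ≠ 0) (hb : b ≠ 0) :
    maximalWords a b c = {[0, 1, 0, 1], [1, 0, 1, 0], [2, 1, 2, 1], [1, 2, 1, 2]} := by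
  ext ω
  simp only [maximalWords, hca, ha, hb, or_false, or_true, true_and, Set.mem_ofPred_eq,
    Set.mem_insert_iff, Set.mem_singleton_iff]
  constructor
  · rintro ⟨i, j, k, hk, rfl, hmax⟩
    have key : ∀ i j : Fin 3, ∀ k < C2Matrix i j + 1,
        (alternatingWord i j k).count 0 + (alternatingWord i j k).count 2 = 2 ∧
        (alternatingWord i j k).count 1 = 2 →
        alternatingWord i j k = [0, 1, 0, 1] ∨ alternatingWord i j k = [1, 0, 1, 0] ∨
          alternatingWord i j k = [2, 1, 2, 1] ∨ alternatingWord i j k = [1, 2, 1, 2] := by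
      decide
    exact key i j k (Nat.lt_succ_of_le hk) hmax
  · rintro (rfl | rfl | rfl | rfl)
    exacts [⟨0, 1, 4, by decide, rfl, by decide⟩, ⟨1, 0, 4, by decide, rfl, by decide⟩,
      ⟨2, 1, 4, by decide, rfl, by decide⟩, ⟨1, 2, 4, by decide, rfl, by decide⟩]

end MaximalWords

theorem stmt12 (L : W → Γ) (a b c : Γ)
    (hweight : ∀ u v : W, cs.length (u * v) = cs.length u + cs.length v →
      L (u * v) = L u + L v)
    (ht : L (cs.simple 0) = a) (hs : L (cs.simple 1) = b) (ht' : L (cs.simple 2) = c)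
    (hc : 0 ≤ c) (hb : 0 ≤ b) (hac : c ≤ a)
    (ν : Γ)
    (hν₁ : ∃ (I : Set (Fin 3)) (w₀ : W), I ≠ Set.univ ∧ IsLongest cs I w₀ ∧ L w₀ = ν)
    (hν₂ : ∀ (I : Set (Fin 3)) (w₀ : W), I ≠ Set.univ → IsLongest cs I w₀ → L w₀ ≤ ν) :
    (a > c → 0 < b → Wmax cs L ν =
      {cs.simple 0 * cs.simple 1 * cs.simple 0 * cs.simple 1}) ∧
    (a > c → b = 0 → Wmax cs L ν =
      {cs.simple 0 * cs.simple 1 * cs.simple 0 * cs.simple 1,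
       cs.simple 0 * cs.simple 1 * cs.simple 0}) ∧
    (a = c → 0 < a → 0 < b → Wmax cs L ν =
      {cs.simple 0 * cs.simple 1 * cs.simple 0 * cs.simple 1,
       cs.simple 2 * cs.simple 1 * cs.simple 2 * cs.simple 1}) := by
  have hν := eq_two_nsmul_add_two_nsmul cs hweight ht hs ht' hb hc hac hν₁ hν₂
  have hbraid₀₁ : cs.wordProd [1, 0, 1, 0] = cs.wordProd [0, 1, 0, 1] :=
    cs.wordProd_braidWord_eq 1 0
  have hbraid₂₁ : cs.wordProd [1, 2, 1, 2] = cs.wordProd [2, 1, 2, 1] :=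
    cs.wordProd_braidWord_eq 1 2
  rw [hν, Wmax_eq_image_maximalWords cs hweight ht hs ht' hb hc hac]
  refine ⟨fun hca hb₀ => ?_, fun hca hb₀ => ?_, fun hca ha hb₀ => ?_⟩
  · rw [maximalWords_of_ne_of_ne_zero hca.ne (hc.trans_lt hca).ne' hb₀.ne', Set.image_pair,
      hbraid₀₁]
    simp [wordProd, mul_assoc]
  · rw [maximalWords_of_ne_of_eq_zero hca.ne (hc.trans_lt hca).ne' hb₀, Set.image_insert_eq,
      Set.image_pair, hbraid₀₁]
    simp [wordProd, mul_assoc]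
  · rw [maximalWords_of_eq_of_ne_zero hca.symm ha.ne' hb₀.ne', Set.image_insert_eq,
      Set.image_insert_eq, Set.image_pair, hbraid₀₁, hbraid₂₁]
    simp [wordProd, mul_assoc]

end Stmt12
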